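/- arXiv:1410.8395 — 3 statements merged into one kernel-verified Lean document; each statement's English description precedes it below -/
import Mathlib

section
/- A game m is supermodular if and only if for every set S ⊆ N, m(S) equals the minimum over all enumerations τ of N of Σ_{i∈S} x^m(τ,i). -/
open Finset

/-- A game is supermodular if `m A + m B ≤ m (A ∪ B) + m (A ∩ B)` for all `A, B`. -/
def Supermod {N : Type*} [DecidableEq N] (m : Finset N → ℝ) : Prop :=
  ∀ A B : Finset N, m A + m B ≤ m (A ∪ B) + m (A ∩ B)

/-- The initial segment `{π 0, ..., π (k-1)}` of the enumeration `π`. -/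
def seg {N : Type*} [Fintype N] [DecidableEq N] (π : Fin (Fintype.card N) ≃ N) (k : ℕ) :
    Finset N :=
  (Finset.univ.filter (fun j : Fin (Fintype.card N) => (j : ℕ) < k)).image π

/-- The marginal vector `x^m(π,·)` of the game `m` w.r.t. the enumeration `π`. -/
def marg {N : Type*} [Fintype N] [DecidableEq N] (m : Finset N → ℝ)
    (π : Fin (Fintype.card N) ≃ N) (i : N) : ℝ :=
  m (seg π ((π.symm i : ℕ) + 1)) - m (seg π ((π.symm i : ℕ)))

/-!
Along an enumeration `π`, the marginal vector summed over an initial segment telescopes to the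
worth of that segment. Supermodularity says marginal contributions grow with the coalition, so
adding the players of `S` one at a time in the order `π` gives `m S ≤ ∑ i ∈ S, marg m π i`.
Conversely, if `π` has `A ∩ B ⊆ B ⊆ A ∪ B` as initial segments, then
`m A + m B ≤ ∑_A + ∑_B = ∑_{A ∪ B} + ∑_{A ∩ B} = m (A ∪ B) + m (A ∩ B)`.
Such a `π` is obtained by sorting `N` along a key whose sublevel sets form the chain.
-/

lemma Fin.lt_card_iff_mem_of_isLowerSet {n : ℕ} {L : Finset (Fin n)}
    (hL : IsLowerSet (L : Set (Fin n))) (j : Fin n) : (j : ℕ) < #L ↔ j ∈ L := by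
  constructor
  · intro hj
    by_contra hjL
    have hsub : L ⊆ Iio j := fun i hi => by
      by_contra hij
      exact hjL (hL (not_lt.mp (by simpa using hij)) hi)
    have := card_le_card hsub
    rw [Fin.card_Iio] at this
    omega
  · intro hj
    have hsub : Iic j ⊆ L := fun i hi => hL (mem_Iic.mp hi) hj
    have := card_le_card hsub
    rw [Fin.card_Iic] at this
    omega

lemma exists_monotone_comp {N α : Type*} [Fintype N] [LinearOrder α] (f : N → α) :
    ∃ π : Fin (Fintype.card N) ≃ N, Monotone (f ∘ π) :=
  let e := (Fintype.equivFin N).symm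
  ⟨(Tuple.sort (f ∘ e)).trans e, Tuple.monotone_sort (f ∘ e)⟩

section Enumeration

variable {N : Type*} [Fintype N] [DecidableEq N]

lemma mem_seg {π : Fin (Fintype.card N) ≃ N} {k : ℕ} {i : N} :
    i ∈ seg π k ↔ (π.symm i : ℕ) < k := by
  simp only [seg, mem_image, mem_filter, mem_univ, true_and]
  constructor
  · rintro ⟨j, hj, rfl⟩
    simpa using hj
  · intro h
    exact ⟨π.symm i, h, π.apply_symm_apply i⟩

lemma seg_zero (π : Fin (Fintype.card N) ≃ N) : seg π 0 = ∅ := by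
  ext i
  simp [mem_seg]

lemma seg_card (π : Fin (Fintype.card N) ≃ N) : seg π (Fintype.card N) = univ := by
  ext i
  simp [mem_seg, (π.symm i).isLt]

lemma notMem_seg_self (π : Fin (Fintype.card N) ≃ N) {k : ℕ} (hk : k < Fintype.card N) :
    π ⟨k, hk⟩ ∉ seg π k := by
  simp [mem_seg]

lemma seg_succ (π : Fin (Fintype.card N) ≃ N) {k : ℕ} (hk : k < Fintype.card N) :
    seg π (k + 1) = insert (π ⟨k, hk⟩) (seg π k) := by
  ext i
  rw [mem_insert, mem_seg, mem_seg, Nat.lt_succ_iff_lt_or_eq, ← Equiv.symm_apply_eq, Fin.ext_iff]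
  tauto

lemma seg_card_filter_lt {α : Type*} [LinearOrder α] {π : Fin (Fintype.card N) ≃ N} {f : N → α}
    (hf : Monotone (f ∘ π)) (c : α) : seg π #{x | f x < c} = ({x | f x < c} : Finset N) := by
  set L : Finset (Fin (Fintype.card N)) := {j | f (π j) < c}
  have hL : IsLowerSet (L : Set (Fin (Fintype.card N))) := fun i j hji hi => by
    simp only [L, coe_filter, mem_univ, true_and] at hi ⊢
    exact (hf hji).trans_lt hi
  have hcard : #L = #{x | f x < c} :=
    card_bij (fun j _ => π j) (by simp [L]) (fun _ _ _ _ h => π.injective h)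
      (fun x hx => ⟨π.symm x, by simpa [L] using hx, π.apply_symm_apply x⟩)
  ext x
  rw [mem_seg, ← hcard, Fin.lt_card_iff_mem_of_isLowerSet hL]
  simp [L]

lemma exists_seg_card_eq_of_subset {S₁ S₂ S₃ : Finset N} (h₁₂ : S₁ ⊆ S₂) (h₂₃ : S₂ ⊆ S₃) :
    ∃ π : Fin (Fintype.card N) ≃ N,
      seg π #S₁ = S₁ ∧ seg π #S₂ = S₂ ∧ seg π #S₃ = S₃ := by
  let rank (x : N) : ℕ := if x ∈ S₁ then 0 else if x ∈ S₂ then 1 else if x ∈ S₃ then 2 else 3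
  have hrank₁ : ({x | rank x < 1} : Finset N) = S₁ := by ext x; grind
  have hrank₂ : ({x | rank x < 2} : Finset N) = S₂ := by ext x; grind
  have hrank₃ : ({x | rank x < 3} : Finset N) = S₃ := by ext x; grind
  obtain ⟨π, hπ⟩ := exists_monotone_comp rank
  refine ⟨π, ?_, ?_, ?_⟩
  · rw [← hrank₁, seg_card_filter_lt hπ]
  · rw [← hrank₂, seg_card_filter_lt hπ]
  · rw [← hrank₃, seg_card_filter_lt hπ]

end Enumeration

lemma Supermod.sub_le_sub_insert {N : Type*} [DecidableEq N] {m : Finset N → ℝ}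
    (hsm : Supermod m) {T U : Finset N} {a : N} (hTU : T ⊆ U) (ha : a ∉ U) : m (insert a T) - m T ≤ m (insert a U) - m U := by
  have h := hsm (insert a T) U
  rw [insert_union, union_eq_right.mpr hTU, insert_inter_of_notMem ha,
    inter_eq_left.mpr hTU] at h
  linarith

section MarginalVector

variable {N : Type*} [Fintype N] [DecidableEq N] {m : Finset N → ℝ}

lemma marg_apply (π : Fin (Fintype.card N) ≃ N) {k : ℕ}
    (hk : k < Fintype.card N) :
    marg m π (π ⟨k, hk⟩) = m (seg π (k + 1)) - m (seg π k) := by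
  simp [marg]

lemma sum_marg_seg (hm : m ∅ = 0) (π : Fin (Fintype.card N) ≃ N) :
    ∀ k ≤ Fintype.card N, ∑ i ∈ seg π k, marg m π i = m (seg π k)
  | 0, _ => by simp [seg_zero, hm]
  | k + 1, h => by
    have hk : k < Fintype.card N := h
    rw [seg_succ π hk, sum_insert (notMem_seg_self π hk), ← seg_succ π hk,
      sum_marg_seg hm π k hk.le, marg_apply π hk]
    ring

lemma sum_marg_of_seg_card_eq (hm : m ∅ = 0) {π : Fin (Fintype.card N) ≃ N} {S : Finset N}
    (hS : seg π #S = S) : ∑ i ∈ S, marg m π i = m S := by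
  conv_lhs => rw [← hS]
  rw [sum_marg_seg hm π #S (card_le_univ S), hS]

lemma Supermod.le_sum_marg_inter_seg (hsm : Supermod m) (hm : m ∅ = 0)
    (π : Fin (Fintype.card N) ≃ N) (S : Finset N) :
    ∀ k ≤ Fintype.card N, m (S ∩ seg π k) ≤ ∑ i ∈ S ∩ seg π k, marg m π i
  | 0, _ => by simp [seg_zero, hm]
  | k + 1, h => by
    have hk : k < Fintype.card N := h
    have ih := hsm.le_sum_marg_inter_seg hm π S k hk.le
    have ha := notMem_seg_self π hk
    rw [seg_succ π hk]
    by_cases haS : π ⟨k, hk⟩ ∈ S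
    · have hinc := hsm.sub_le_sub_insert (inter_subset_right (s₁ := S)) ha
      rw [inter_insert_of_mem haS, sum_insert (fun h => ha (mem_inter.mp h).2), marg_apply π hk,
        seg_succ π hk]
      linarith
    · rwa [inter_insert_of_notMem haS]

lemma Supermod.le_sum_marg (hsm : Supermod m) (hm : m ∅ = 0) (π : Fin (Fintype.card N) ≃ N)
    (S : Finset N) : m S ≤ ∑ i ∈ S, marg m π i := by
  simpa [seg_card] using hsm.le_sum_marg_inter_seg hm π S _ le_rfl

end MarginalVector

theorem stmt5_general {N : Type*} [Fintype N] [DecidableEq N]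
    (m : Finset N → ℝ) (hm : m ∅ = 0) :
    Supermod m ↔
      ∀ S : Finset N,
        IsLeast {r : ℝ | ∃ τ : Fin (Fintype.card N) ≃ N, r = ∑ i ∈ S, marg m τ i} (m S) := by
  constructor
  · intro hsm S
    obtain ⟨π, hπ, -, -⟩ := exists_seg_card_eq_of_subset (subset_refl S) (subset_refl S)
    exact ⟨⟨π, (sum_marg_of_seg_card_eq hm hπ).symm⟩,
      fun r ⟨τ, hr⟩ => hr ▸ hsm.le_sum_marg hm τ S⟩
  · intro hmin A B
    obtain ⟨π, hAB, hB, hU⟩ :=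
      exists_seg_card_eq_of_subset (inter_subset_right (s₁ := A)) (subset_union_right (s₁ := A))
    calc m A + m B ≤ ∑ i ∈ A, marg m π i + ∑ i ∈ B, marg m π i :=
          add_le_add ((hmin A).2 ⟨π, rfl⟩) (sum_marg_of_seg_card_eq hm hB).ge
      _ = ∑ i ∈ A ∪ B, marg m π i + ∑ i ∈ A ∩ B, marg m π i := (sum_union_inter).symm
      _ = m (A ∪ B) + m (A ∩ B) := by
          rw [sum_marg_of_seg_card_eq hm hU, sum_marg_of_seg_card_eq hm hAB]

/-- `m` is supermodular iff `m S` is the minimum over all enumerations `τ` of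
`∑_{i ∈ S} x^m(τ,i)`. -/
theorem stmt5 {N : Type*} [Fintype N] [DecidableEq N] [Nonempty N]
    (m : Finset N → ℝ) (hm : m ∅ = 0) :
    Supermod m ↔
      ∀ S : Finset N,
        IsLeast {r : ℝ | ∃ τ : Fin (Fintype.card N) ≃ N, r = ∑ i ∈ S, marg m τ i} (m S) :=
  stmt5_general m hm
end

section
/- Let m be a game such that its core C(m) is nonempty and all vertices of C(m) are 0–1 vectors, and suppose m is standardized supermodular. Then m is integer-valued and m(N) − m(N∖{i}) ≤ 1 for every i ∈ N. Conversely, if m is standardized supermodular, integer-valued, and m(N) − m(N∖{i}) ≤ 1 for all i, then every vertex of C(m) is a 0–1 vector. -/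
open Finset

/-- The core of a game. -/
def core {N : Type*} [Fintype N] [DecidableEq N] (m : Finset N → ℝ) : Set (N → ℝ) :=
  {v | ∑ i, v i = m Finset.univ ∧ ∀ S : Finset N, m S ≤ ∑ i ∈ S, v i}

/-!
Shapley's marginal vectors drive both directions. For an ordering of the players, paying each
player its marginal contribution to the coalition of its predecessors gives, by supermodularity,
a point `v` of the core that is tight (`∑ i ∈ T, v i = m T`) on every initial segment of the
ordering; since the sums over the initial segments determine a vector, this point is a vertex.
An ordering that starts with `S` thus yields a vertex tight on `S`, so `m S` is a sum of 0–1
coordinates, and `m N - m (N \ {i})` is the `i`-th coordinate of a vertex tight on `N \ {i}`.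

Conversely, by supermodularity the coalitions on which a core point `v` is tight are closed under
`∪` and `∩`, and at a vertex any two players `i ≠ j` are separated by a tight coalition
(otherwise shifting a little payoff between `i` and `j` in either direction stays in the core).
Hence if `A` is the least tight coalition containing `i` and `B` the largest one avoiding `i`,
then `A ∩ B = A \ {i}`, and `v i = m A - m (A \ {i})` is an integer in
`[0, m N - m (N \ {i})] ⊆ [0, 1]`.
-/

theorem List.apply_eq_apply_of_sum_suffix_eq {N M : Type*} [DecidableEq N] [AddCommGroup M]
    {x y : N → M} {l : List N} (hl : l.Nodup)
    (h : ∀ l', l' <:+ l → ∑ i ∈ l'.toFinset, x i = ∑ i ∈ l'.toFinset, y i) :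
    ∀ i ∈ l, x i = y i := by
  induction l with
  | nil => simp
  | cons a l ih =>
    have ha : a ∉ l.toFinset := by simpa using (List.nodup_cons.1 hl).1
    have hal := h (a :: l) (List.suffix_refl _)
    rw [List.toFinset_cons, sum_insert ha, sum_insert ha, h l (List.suffix_cons a l)] at hal
    intro i hi
    rcases List.mem_cons.1 hi with rfl | hi
    · exact add_right_cancel hal
    · exact ih (List.nodup_cons.1 hl).2
        (fun l' hl' => h l' (hl'.trans (List.suffix_cons a l))) i hi

theorem eq_zero_of_mem_extremePoints_of_eventually_add_smul_mem {E : Type*} [AddCommGroup E]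
    [Module ℝ E] {A : Set E} {v d : E} (hv : v ∈ Set.extremePoints ℝ A)
    (hd : ∀ᶠ s in nhds (0 : ℝ), v + s • d ∈ A) : d = 0 := by
  have hd' : ∀ᶠ s in nhds (0 : ℝ), v + s • d ∈ A ∧ v + (-s) • d ∈ A :=
    hd.and ((continuous_neg.tendsto' 0 0 neg_zero).eventually hd)
  obtain ⟨s, hs, hplus, hminus⟩ := hd'.exists_gt
  have hmid : v ∈ openSegment ℝ (v + s • d) (v + (-s) • d) :=
    ⟨1 / 2, 1 / 2, by norm_num, by norm_num, by norm_num, by module⟩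
  simpa [hs.ne'] using hv.2 hplus hminus hmid

theorem apply_eq_sub_of_sum_eq {N : Type*} [DecidableEq N] {m : Finset N → ℝ} {v : N → ℝ}
    {A : Finset N} {i : N} (hi : i ∈ A) (hA : ∑ k ∈ A, v k = m A)
    (hAi : ∑ k ∈ A.erase i, v k = m (A.erase i)) : v i = m A - m (A.erase i) := by
  linarith [add_sum_erase A v hi]

section Marginal

variable {N : Type*} [DecidableEq N] (m : Finset N → ℝ)

/-- The marginal vector of the ordering in which the players of the list join from last to first. -/
noncomputable def marginalVector : List N → N → ℝ
  | [] => 0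
  | a :: l => Function.update (marginalVector l) a (m (a :: l).toFinset - m l.toFinset)

variable {m}

theorem marginalVector_append_of_notMem {l₁ : List N} {i : N} (hi : i ∉ l₁) (l₂ : List N) :
    marginalVector m (l₁ ++ l₂) i = marginalVector m l₂ i := by
  induction l₁ with
  | nil => rfl
  | cons a l ih =>
    rw [List.mem_cons, not_or] at hi
    rw [List.cons_append, marginalVector, Function.update_of_ne hi.1, ih hi.2]

theorem sum_marginalVector {l : List N} (hl : l.Nodup) :
    ∑ i ∈ l.toFinset, marginalVector m l i = m l.toFinset - m ∅ := by
  induction l with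
  | nil => simp
  | cons a l ih =>
    have ha : a ∉ l.toFinset := by simpa using (List.nodup_cons.1 hl).1
    rw [List.toFinset_cons, sum_insert ha, marginalVector, Function.update_self,
      sum_congr rfl fun i hi => Function.update_of_ne (ne_of_mem_of_not_mem hi ha) _ _,
      ih (List.nodup_cons.1 hl).2, List.toFinset_cons]
    ring

theorem Supermod.sub_le_sum_marginalVector (hsup : Supermod m) {l : List N} (hl : l.Nodup)
    (T : Finset N) : m (T ∩ l.toFinset) - m ∅ ≤ ∑ i ∈ T ∩ l.toFinset, marginalVector m l i := by
  induction l with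
  | nil => simp
  | cons a l ih =>
    have ha : a ∉ l.toFinset := by simpa using (List.nodup_cons.1 hl).1
    have hrest : ∑ i ∈ T ∩ l.toFinset, marginalVector m (a :: l) i =
        ∑ i ∈ T ∩ l.toFinset, marginalVector m l i :=
      sum_congr rfl fun i hi =>
        Function.update_of_ne (ne_of_mem_of_not_mem (mem_inter.1 hi).2 ha) _ _
    have ih := ih (List.nodup_cons.1 hl).2
    rw [List.toFinset_cons]
    by_cases haT : a ∈ T
    · have haTl : a ∉ T ∩ l.toFinset := fun h => ha (mem_inter.1 h).2
      rw [inter_insert_of_mem haT, sum_insert haTl, hrest, marginalVector, Function.update_self,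
        List.toFinset_cons]
      have hsm := hsup (insert a (T ∩ l.toFinset)) l.toFinset
      rw [insert_union, union_eq_right.2 inter_subset_right, insert_inter_of_notMem ha,
        inter_assoc, inter_self] at hsm
      linarith
    · rwa [inter_insert_of_notMem haT, hrest]

theorem sum_marginalVector_of_isSuffix {l l' : List N} (hl : l.Nodup) (h : l' <:+ l) :
    ∑ i ∈ l'.toFinset, marginalVector m l i = m l'.toFinset - m ∅ := by
  obtain ⟨t, rfl⟩ := h
  rw [sum_congr rfl fun i hi => marginalVector_append_of_notMem
    (fun hit => List.disjoint_of_nodup_append hl hit (List.mem_toFinset.1 hi)) l']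
  exact sum_marginalVector (List.nodup_append.1 hl).2.1

end Marginal


section Core

variable {N : Type*} [Fintype N] [DecidableEq N] {m : Finset N → ℝ}

theorem marginalVector_mem_core (hsup : Supermod m) (h0 : m ∅ = 0) {l : List N}
    (hl : l.Nodup) (hcover : l.toFinset = univ) : marginalVector m l ∈ core m := by
  refine ⟨?_, fun T => ?_⟩
  · simpa [hcover, h0] using sum_marginalVector (m := m) hl
  · simpa [hcover, h0] using hsup.sub_le_sum_marginalVector hl T

theorem sum_eq_of_mem_openSegment {x y v : N → ℝ} (hx : x ∈ core m) (hy : y ∈ core m)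
    (hv : v ∈ openSegment ℝ x y) {T : Finset N} (hT : ∑ i ∈ T, v i = m T) :
    ∑ i ∈ T, x i = m T := by
  obtain ⟨a, b, ha, hb, hab, rfl⟩ := hv
  simp only [Pi.add_apply, Pi.smul_apply, smul_eq_mul, sum_add_distrib, ← mul_sum] at hT
  have hxT := mul_nonneg ha.le (sub_nonneg.2 (hx.2 T))
  have hyT := mul_nonneg hb.le (sub_nonneg.2 (hy.2 T))
  have hsum : a * (∑ i ∈ T, x i - m T) + b * (∑ i ∈ T, y i - m T) = 0 := by
    linear_combination hT - m T * hab
  have h : a * (∑ i ∈ T, x i - m T) = 0 := by linarith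
  exact sub_eq_zero.1 ((mul_eq_zero.1 h).resolve_left ha.ne')

theorem marginalVector_mem_extremePoints (hsup : Supermod m) (h0 : m ∅ = 0) {l : List N}
    (hl : l.Nodup) (hcover : l.toFinset = univ) :
    marginalVector m l ∈ Set.extremePoints ℝ (core m) := by
  have htight : ∀ l', l' <:+ l → ∑ i ∈ l'.toFinset, marginalVector m l i = m l'.toFinset := by
    intro l' hl'
    rw [sum_marginalVector_of_isSuffix hl hl', h0, sub_zero]
  refine ⟨marginalVector_mem_core hsup h0 hl hcover, fun x hx y hy hseg => funext fun i => ?_⟩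
  refine List.apply_eq_apply_of_sum_suffix_eq hl (fun l' hl' => ?_) i
    (List.mem_toFinset.1 (hcover ▸ mem_univ i))
  rw [sum_eq_of_mem_openSegment hx hy hseg (htight l' hl'), htight l' hl']

theorem exists_mem_extremePoints_sum_eq (hsup : Supermod m) (h0 : m ∅ = 0) (S : Finset N) :
    ∃ w ∈ Set.extremePoints ℝ (core m), ∑ i ∈ S, w i = m S := by
  have hl : (Sᶜ.toList ++ S.toList).Nodup :=
    (nodup_toList _).append (nodup_toList _) fun a ha ha' =>
      mem_compl.1 (mem_toList.1 ha) (mem_toList.1 ha')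
  have hcover : (Sᶜ.toList ++ S.toList).toFinset = univ := by
    rw [List.toFinset_append, toList_toFinset, toList_toFinset, union_comm, union_compl]
  refine ⟨_, marginalVector_mem_extremePoints hsup h0 hl hcover, ?_⟩
  simpa [h0] using sum_marginalVector_of_isSuffix (m := m) hl (List.suffix_append _ _)

theorem eventually_add_smul_mem_core {v d : N → ℝ} (hv : v ∈ core m)
    (hd : ∀ T : Finset N, ∑ i ∈ T, v i = m T → ∑ i ∈ T, d i = 0) :
    ∀ᶠ s in nhds (0 : ℝ), v + s • d ∈ core m := by
  have hsum : ∀ (s : ℝ) (T : Finset N),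
      ∑ i ∈ T, (v + s • d) i = ∑ i ∈ T, v i + s * ∑ i ∈ T, d i := by
    simp [sum_add_distrib, mul_sum]
  have hT : ∀ T : Finset N, ∀ᶠ s in nhds (0 : ℝ), m T ≤ ∑ i ∈ T, v i + s * ∑ i ∈ T, d i := by
    intro T
    rcases (hv.2 T).eq_or_lt with htight | hslack
    · exact Filter.Eventually.of_forall fun s => by
        rw [hd T htight.symm, mul_zero, add_zero, htight]
    · have hcont : Continuous fun s : ℝ => ∑ i ∈ T, v i + s * ∑ i ∈ T, d i := by fun_prop
      have := (hcont.tendsto 0).eventually_const_lt (by simpa using hslack)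
      exact this.mono fun _ => le_of_lt
  filter_upwards [Filter.eventually_all.2 hT] with s hs
  refine ⟨?_, fun T => (hs T).trans_eq (hsum s T).symm⟩
  rw [hsum, hd univ hv.1, mul_zero, add_zero, hv.1]

theorem exists_tight_separating {v : N → ℝ} (hv : v ∈ Set.extremePoints ℝ (core m)) {i j : N}
    (hij : i ≠ j) : ∃ T : Finset N, ∑ k ∈ T, v k = m T ∧ ¬(i ∈ T ↔ j ∈ T) := by
  by_contra! h
  have hd : Pi.single i 1 - Pi.single j 1 = (0 : N → ℝ) :=
    eq_zero_of_mem_extremePoints_of_eventually_add_smul_mem hv <|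
      eventually_add_smul_mem_core hv.1 fun T hT => by
        simp [sum_sub_distrib, sum_pi_single', h T hT]
  simpa [hij] using congrFun hd i

theorem Supermod.sum_inter_eq_and_sum_union_eq (hsup : Supermod m) {v : N → ℝ}
    (hv : v ∈ core m) {A B : Finset N} (hA : ∑ k ∈ A, v k = m A) (hB : ∑ k ∈ B, v k = m B) :
    ∑ k ∈ A ∩ B, v k = m (A ∩ B) ∧ ∑ k ∈ A ∪ B, v k = m (A ∪ B) := by
  have := sum_union_inter (s₁ := A) (s₂ := B) (f := v)
  have := hv.2 (A ∩ B)
  have := hv.2 (A ∪ B)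
  have := hsup A B
  constructor <;> linarith

theorem Supermod.exists_apply_eq_sub_of_mem_extremePoints (hsup : Supermod m) (h0 : m ∅ = 0)
    {v : N → ℝ} (hv : v ∈ Set.extremePoints ℝ (core m)) (i : N) :
    ∃ A : Finset N, i ∈ A ∧ v i = m A - m (A.erase i) := by
  classical
  set A := (univ.filter fun T : Finset N => ∑ k ∈ T, v k = m T ∧ i ∈ T).inf id
  set B := (univ.filter fun T : Finset N => ∑ k ∈ T, v k = m T ∧ i ∉ T).sup id
  have hA : ∑ k ∈ A, v k = m A ∧ i ∈ A :=
    inf_induction (p := fun X => ∑ k ∈ X, v k = m X ∧ i ∈ X) ⟨hv.1.1, mem_univ i⟩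
      (fun X hX Y hY => ⟨(hsup.sum_inter_eq_and_sum_union_eq hv.1 hX.1 hY.1).1,
        mem_inter.2 ⟨hX.2, hY.2⟩⟩)
      fun T hT => (mem_filter.1 hT).2
  have hB : ∑ k ∈ B, v k = m B ∧ i ∉ B :=
    sup_induction (p := fun X => ∑ k ∈ X, v k = m X ∧ i ∉ X) ⟨by simp [h0], notMem_empty i⟩
      (fun X hX Y hY => ⟨(hsup.sum_inter_eq_and_sum_union_eq hv.1 hX.1 hY.1).2,
        by simp [hX.2, hY.2]⟩)
      fun T hT => (mem_filter.1 hT).2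
  have hAB : A.erase i = A ∩ B := by
    ext j
    simp only [mem_erase, mem_inter]
    refine ⟨fun ⟨hji, hjA⟩ => ⟨hjA, ?_⟩, fun ⟨hjA, hjB⟩ => ⟨fun hji => hB.2 (hji ▸ hjB), hjA⟩⟩
    obtain ⟨T, hT, hsep⟩ := exists_tight_separating hv (Ne.symm hji)
    by_cases hiT : i ∈ T
    · have hAT : A ⊆ T := inf_le (f := id) (mem_filter.2 ⟨mem_univ T, hT, hiT⟩)
      exact absurd (iff_of_true hiT (hAT hjA)) hsep
    · have hTB : T ⊆ B := le_sup (f := id) (mem_filter.2 ⟨mem_univ T, hT, hiT⟩)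
      exact hTB (by tauto)
  refine ⟨A, hA.2, apply_eq_sub_of_sum_eq hA.2 hA.1 ?_⟩
  rw [hAB]
  exact (hsup.sum_inter_eq_and_sum_union_eq hv.1 hA.1 hB.1).1

end Core

/-- For a standardized supermodular game `m`, all vertices of the core are 0–1 vectors
iff `m` is integer-valued and `m(N) - m(N∖{i}) ≤ 1` for every `i`. -/
theorem stmt13 {N : Type*} [Fintype N] [DecidableEq N]
    (m : Finset N → ℝ) (hsup : Supermod m)
    (hstd : ∀ S : Finset N, S.card ≤ 1 → m S = 0) :
    (((core m).Nonempty →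
        (∀ v ∈ Set.extremePoints ℝ (core m), ∀ i : N, v i = 0 ∨ v i = 1) →
        (∀ S : Finset N, ∃ z : ℤ, m S = z) ∧
          ∀ i : N, m Finset.univ - m (Finset.univ.erase i) ≤ 1)) ∧
    ((∀ S : Finset N, ∃ z : ℤ, m S = z) →
      (∀ i : N, m Finset.univ - m (Finset.univ.erase i) ≤ 1) →
      ∀ v ∈ Set.extremePoints ℝ (core m), ∀ i : N, v i = 0 ∨ v i = 1) := by
  have h0 : m ∅ = 0 := hstd ∅ (by simp)
  refine ⟨fun _ h01 => ⟨fun S => ?_, fun i => ?_⟩, fun hint hmarg v hv i => ?_⟩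
  · obtain ⟨w, hw, hwS⟩ := exists_mem_extremePoints_sum_eq hsup h0 S
    refine ⟨∑ k ∈ S, if w k = 1 then 1 else 0, ?_⟩
    rw [← hwS]
    push_cast
    exact sum_congr rfl fun k _ => by rcases h01 w hw k with h | h <;> simp [h]
  · obtain ⟨w, hw, hwi⟩ := exists_mem_extremePoints_sum_eq hsup h0 (univ.erase i)
    rw [← apply_eq_sub_of_sum_eq (mem_univ i) hw.1.1 hwi]
    rcases h01 w hw i with h | h <;> norm_num [h]
  · obtain ⟨A, -, hvi⟩ := hsup.exists_apply_eq_sub_of_mem_extremePoints h0 hv i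
    obtain ⟨z, hz⟩ : ∃ z : ℤ, v i = z := by
      obtain ⟨a, ha⟩ := hint A
      obtain ⟨b, hb⟩ := hint (A.erase i)
      exact ⟨a - b, by rw [hvi, ha, hb, Int.cast_sub]⟩
    have hnonneg : (0 : ℝ) ≤ z := by simpa [← hz, hstd {i} (by simp)] using hv.1.2 {i}
    have hle : (z : ℝ) ≤ 1 := by
      linarith [hv.1.2 (univ.erase i), add_sum_erase univ v (mem_univ i), hv.1.1, hmarg i]
    have : z = 0 ∨ z = 1 := by
      have : 0 ≤ z := by exact_mod_cast hnonneg
      have : z ≤ 1 := by exact_mod_cast hle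
      omega
    rcases this with rfl | rfl <;> simp [hz]
end

section
/- A game m with m(∅)=0 is supermodular if and only if for every pair of sets A,B ⊆ N, the sum of the Möbius inversion μ_m(D) over all D ⊆ A∪B with D∖A ≠ ∅ and D∖B ≠ ∅ is nonnegative. -/
open Finset

/-- The Möbius inversion of a set function. -/
def mobius {N : Type*} [DecidableEq N] (m : Finset N → ℝ) (A : Finset N) : ℝ :=
  ∑ B ∈ A.powerset, (-1 : ℝ) ^ (A.card - B.card) * m B

section

variable {N : Type*} [DecidableEq N]

theorem Finset.sum_Icc_neg_one_pow_card_sdiff {R : Type*} [Ring R] {B S : Finset N}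
    (hBS : B ⊆ S) : ∑ D ∈ Icc B S, (-1 : R) ^ #(D \ B) = if B = S then 1 else 0 := by
  have hsdiff : ∀ E ∈ (S \ B).powerset, (B ∪ E) \ B = E := fun E hE => by
    rw [union_sdiff_left,
      (disjoint_of_subset_left (mem_powerset.1 hE) sdiff_disjoint).sdiff_eq_left]
  have hinj : Set.InjOn (B ∪ ·) (S \ B).powerset := fun E hE F hF hEF => by
    rw [← hsdiff E hE, ← hsdiff F hF]
    exact congrArg (· \ B) hEF
  have hSB : S ⊆ B ↔ B = S := ⟨fun h => hBS.antisymm h, fun h => h ▸ subset_rfl⟩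
  rw [Icc_eq_image_powerset hBS, sum_image hinj, sum_congr rfl fun E hE => by rw [hsdiff E hE]]
  have h := congrArg (Int.cast : ℤ → R) (sum_powerset_neg_one_pow_card (x := S \ B))
  push_cast [sdiff_eq_empty_iff_subset, hSB] at h
  exact h

theorem sum_powerset_mobius (m : Finset N → ℝ) (S : Finset N) :
    ∑ D ∈ S.powerset, mobius m D = m S := by
  calc ∑ D ∈ S.powerset, mobius m D
      = ∑ B ∈ S.powerset, ∑ D ∈ Icc B S, (-1 : ℝ) ^ (#D - #B) * m B := by
        refine sum_comm' fun D B => ?_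
        simp only [mem_powerset, mem_Icc]
        exact ⟨fun ⟨hDS, hBD⟩ => ⟨⟨hBD, hDS⟩, hBD.trans hDS⟩, fun ⟨h, _⟩ => ⟨h.2, h.1⟩⟩
    _ = ∑ B ∈ S.powerset, if B = S then m B else 0 := by
        refine sum_congr rfl fun B hB => ?_
        have hcard : ∀ D ∈ Icc B S, #D - #B = #(D \ B) := fun D hD =>
          (card_sdiff_of_subset (mem_Icc.1 hD).1).symm
        rw [← sum_mul, sum_congr rfl fun D hD => by rw [hcard D hD],
          sum_Icc_neg_one_pow_card_sdiff (mem_powerset.1 hB)]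
        split_ifs <;> simp
    _ = m S := by simp

theorem sum_mobius_filter_sdiff_nonempty (m : Finset N → ℝ) (A B : Finset N) :
    ∑ D ∈ (A ∪ B).powerset.filter (fun D => (D \ A).Nonempty ∧ (D \ B).Nonempty), mobius m D
      = m (A ∪ B) + m (A ∩ B) - m A - m B := by
  have hcompl : (A ∪ B).powerset.filter (fun D => ¬((D \ A).Nonempty ∧ (D \ B).Nonempty))
      = A.powerset ∪ B.powerset := by
    ext D
    simp only [mem_filter, mem_powerset, mem_union, sdiff_nonempty, not_and_or, not_not]
    exact ⟨And.right, fun h => ⟨h.elim (·.trans subset_union_left) (·.trans subset_union_right), h⟩⟩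
  have hsplit := sum_filter_add_sum_filter_not (A ∪ B).powerset
    (fun D => (D \ A).Nonempty ∧ (D \ B).Nonempty) (mobius m)
  have hincl_excl := sum_union_inter (s₁ := A.powerset) (s₂ := B.powerset) (f := mobius m)
  rw [hcompl, sum_powerset_mobius] at hsplit
  have hinter : A.powerset ∩ B.powerset = (A ∩ B).powerset := by
    ext D
    simp only [mem_inter, mem_powerset, subset_inter_iff]
  rw [hinter, sum_powerset_mobius, sum_powerset_mobius, sum_powerset_mobius] at hincl_excl
  linarith

end

theorem stmt15_general {N : Type*} [DecidableEq N]
    (m : Finset N → ℝ) :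
    Supermod m ↔
      ∀ A B : Finset N,
        0 ≤ ∑ D ∈ (A ∪ B).powerset.filter (fun D => (D \ A).Nonempty ∧ (D \ B).Nonempty),
              mobius m D := by
  simp only [Supermod, sum_mobius_filter_sdiff_nonempty]
  exact forall₂_congr fun A B => ⟨fun h => by linarith, fun h => by linarith⟩

/-- `m` is supermodular iff for every `A, B` the sum of `μ_m(D)` over all
`D ⊆ A ∪ B` with `D∖A ≠ ∅` and `D∖B ≠ ∅` is nonnegative. -/
theorem stmt15 {N : Type*} [Fintype N] [DecidableEq N]
    (m : Finset N → ℝ) (hm : m ∅ = 0) :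
    Supermod m ↔
      ∀ A B : Finset N,
        0 ≤ ∑ D ∈ (A ∪ B).powerset.filter (fun D => (D \ A).Nonempty ∧ (D \ B).Nonempty),
              mobius m D :=
  stmt15_general m
end
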